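/- Let μ be a probability measure on (0,∞) that is not a Dirac mass, let Y ∼ μ, let ρ ∈ (-1,1), ρ̄ = √(1-ρ²), and let φ' and g be measurable functions on (0,∞) with the relevant integrability. Define the 3×2-like covariance-structure matrix Q = E_μ[α α^T] where α(y) is the 3×2 matrix with rows (ρ√y + φ'(y)g(y), ρ̄√y), (1, 0), (0, 1). Then det(Q) = Var_μ(ρ√Y + φ'(Y)g(Y)) + ρ̄² (E_μ[Y] - E_μ[√Y]²) ≥ 0, with equality impossible when Y is non-degenerate under μ; hence Q is invertible. -/

import Mathlib

/-! Write `α(y) = !![u y, v y; 1, 0; 0, 1]` with `u y = ρ√y + φ'(y)g(y)` and `v y = ρ̄√y`.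
Since the lower-right `2×2` block of `Q = E[α αᵀ]` is the identity, `det Q` is the Schur
complement `E[u² + v²] - E[u]² - E[v]² = Var u + ρ̄² Var √Y`. The last variance is positive:
if `√Y` were a.s. constant, so would be `Y = (√Y)²`. -/

open MeasureTheory Matrix

/-- The `3×2` matrix `α(y)` appearing in the large-time moderate deviations covariance
structure, with first row `(ρ√y + φ'(y)g(y), ρ̄√y)` and the identity below. -/
noncomputable def alphaMat (ρ ρb : ℝ) (φ' g : ℝ → ℝ) (y : ℝ) : Matrix (Fin 3) (Fin 2) ℝ :=
  !![ρ * Real.sqrt y + φ' y * g y, ρb * Real.sqrt y;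
     1, 0;
     0, 1]

open ProbabilityTheory

lemma Matrix.det_fin_three_of_lowerRight_eq_one {R : Type*} [CommRing R]
    (A : Matrix (Fin 3) (Fin 3) R) (h11 : A 1 1 = 1) (h12 : A 1 2 = 0) (h21 : A 2 1 = 0)
    (h22 : A 2 2 = 1) :
    A.det = A 0 0 - A 0 1 * A 1 0 - A 0 2 * A 2 0 := by
  rw [det_fin_three, h11, h12, h21, h22]
  ring

lemma Matrix.mul_transpose_fin_three_two {R : Type*} [CommRing R] (a b : R) :
    !![a, b; 1, 0; 0, 1] * (!![a, b; 1, 0; 0, 1])ᵀ =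
      !![a ^ 2 + b ^ 2, a, b; a, 1, 0; b, 0, 1] := by
  ext i j
  fin_cases i <;> fin_cases j <;> simp [mul_apply, Fin.sum_univ_two, sq]

section Variance

variable {Ω : Type*} [MeasurableSpace Ω] {μ : Measure Ω}

lemma ProbabilityTheory.variance_pos_of_not_ae_eq_const [IsFiniteMeasure μ] {X : Ω → ℝ}
    (hX : MemLp X 2 μ) (hconst : ∀ c : ℝ, ¬ ∀ᵐ ω ∂μ, X ω = c) : 0 < Var[X; μ] :=
  (variance_nonneg X μ).lt_of_ne fun h => hconst _ (ae_eq_integral_of_variance_eq_zero hX h.symm)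

lemma det_integral_gram_eq_variance_add_variance [IsProbabilityMeasure μ] {u v : Ω → ℝ}
    (hu : MemLp u 2 μ) (hv : MemLp v 2 μ) (Q : Matrix (Fin 3) (Fin 3) ℝ)
    (hQ : ∀ i j, Q i j = ∫ ω, (!![u ω, v ω; 1, 0; 0, 1] * (!![u ω, v ω; 1, 0; 0, 1])ᵀ) i j ∂μ) :
    Q.det = Var[u; μ] + Var[v; μ] := by
  simp only [mul_transpose_fin_three_two] at hQ
  rw [det_fin_three_of_lowerRight_eq_one Q (by simp [hQ]) (by simp [hQ]) (by simp [hQ])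
    (by simp [hQ]), variance_eq_sub hu, variance_eq_sub hv]
  simp only [hQ, of_apply, cons_val', cons_val_zero, cons_val_one, cons_val_two, empty_val',
    cons_val_fin_one, tail_cons, vecHead, Pi.pow_apply,
    integral_add hu.integrable_sq hv.integrable_sq]
  ring

end Variance

lemma not_ae_eq_const_sqrt {μ : Measure ℝ} (hnonneg : ∀ᵐ y ∂μ, 0 ≤ y)
    (hconst : ∀ c : ℝ, ¬ ∀ᵐ y ∂μ, y = c) (c : ℝ) : ¬ ∀ᵐ y ∂μ, Real.sqrt y = c := fun h =>
  hconst (c ^ 2) <| by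
    filter_upwards [h, hnonneg] with y hy hy0
    rw [← hy, Real.sq_sqrt hy0]

/-- For a non-degenerate probability measure `μ` on `(0,∞)`, the matrix
`Q = E_μ[α αᵀ]` has determinant `Var_μ(ρ√Y + φ'(Y)g(Y)) + ρ̄²(E_μ[Y] - E_μ[√Y]²) > 0`
(by Cauchy–Schwarz, with equality impossible for non-degenerate `Y`), hence `Q` is
invertible. -/
theorem stmt8 (μ : Measure ℝ) [IsProbabilityMeasure μ] (hsupp : μ (Set.Iic 0) = 0)
    (hnondeg : ∀ c : ℝ, ¬ (∀ᵐ y ∂μ, y = c))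
    (ρ : ℝ) (hρ : ρ ∈ Set.Ioo (-1 : ℝ) 1) (ρb : ℝ) (hρb : ρb = Real.sqrt (1 - ρ ^ 2))
    (φ' g : ℝ → ℝ)
    (hint1 : Integrable (fun y => y) μ)
    (hint2 : Integrable (fun y => Real.sqrt y) μ)
    (hint3 : Integrable (fun y => ρ * Real.sqrt y + φ' y * g y) μ)
    (hint4 : Integrable (fun y => (ρ * Real.sqrt y + φ' y * g y) ^ 2) μ)
    (Q : Matrix (Fin 3) (Fin 3) ℝ)
    (hQ : ∀ i j, Q i j = ∫ y, (alphaMat ρ ρb φ' g y * (alphaMat ρ ρb φ' g y)ᵀ) i j ∂μ) :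
    Q.det = ((∫ y, (ρ * Real.sqrt y + φ' y * g y) ^ 2 ∂μ)
              - (∫ y, (ρ * Real.sqrt y + φ' y * g y) ∂μ) ^ 2)
            + (1 - ρ ^ 2) * ((∫ y, y ∂μ) - (∫ y, Real.sqrt y ∂μ) ^ 2)
      ∧ 0 < Q.det ∧ IsUnit Q := by
  have hρ2 : 0 < 1 - ρ ^ 2 := by nlinarith [hρ.1, hρ.2]
  have hρb2 : ρb ^ 2 = 1 - ρ ^ 2 := hρb ▸ Real.sq_sqrt hρ2.le
  have hnonneg : ∀ᵐ y ∂μ, 0 ≤ y :=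
    measure_mono_null (fun y (hy : ¬ 0 ≤ y) => (not_le.1 hy).le) hsupp
  have hsq : ∀ᵐ y ∂μ, Real.sqrt y ^ 2 = y := hnonneg.mono fun y hy => Real.sq_sqrt hy
  have hsqrt : MemLp Real.sqrt 2 μ := (memLp_two_iff_integrable_sq hint2.aestronglyMeasurable).2
    (hint1.congr (hsq.mono fun _ h => h.symm))
  have hu : MemLp (fun y => ρ * Real.sqrt y + φ' y * g y) 2 μ :=
    (memLp_two_iff_integrable_sq hint3.aestronglyMeasurable).2 hint4
  have hdet : Q.det = Var[fun y => ρ * Real.sqrt y + φ' y * g y; μ]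
      + (1 - ρ ^ 2) * Var[Real.sqrt; μ] := by
    rw [det_integral_gram_eq_variance_add_variance hu (hsqrt.const_mul ρb) Q hQ,
      variance_const_mul, hρb2]
  have hvar_sqrt : Var[Real.sqrt; μ] = ∫ y, y ∂μ - (∫ y, Real.sqrt y ∂μ) ^ 2 := by
    rw [variance_eq_sub hsqrt, ← integral_congr_ae hsq]
    rfl
  have hdet_pos : 0 < Q.det := hdet ▸ add_pos_of_nonneg_of_pos (variance_nonneg _ _)
    (mul_pos hρ2 (variance_pos_of_not_ae_eq_const hsqrt (not_ae_eq_const_sqrt hnonneg hnondeg)))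
  refine ⟨by rw [hdet, variance_eq_sub hu, hvar_sqrt]; rfl, hdet_pos, ?_⟩
  exact (isUnit_iff_isUnit_det Q).2 hdet_pos.ne'.isUnit
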